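/- arXiv:1502.05657 — 2 statements merged into one kernel-verified Lean document; each statement's English description precedes it below -/
import Mathlib

section
/- Let F be a field with char F ≠ 2 and let n ≥ 1. With respect to the Jordan product X ∙ Y := (1/2)(XY + YX), the matrices m_{ij} satisfy the Matsuo multiplication rules: (i) m_{ij} ∙ m_{ij} = m_{ij} for all i ≠ j; (ii) m_{ij} ∙ m_{kl} = 0 whenever {i,j} ∩ {k,l} = ∅; (iii) m_{ij} ∙ m_{jk} = (1/4)(m_{ij} + m_{jk} − m_{ik}) for all pairwise distinct i, j, k. -/
/-!
Writing `a = e_i - e_j`, we have `m_{ij} = ½ a aᵀ`. Since `(a aᵀ)(b bᵀ) = (a ⬝ b) a bᵀ`, the Jordan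
product of `½ a aᵀ` and `½ b bᵀ` is `⅛ (a ⬝ b)(a bᵀ + b aᵀ)`, and by polarization
`a bᵀ + b aᵀ = (a + b)(a + b)ᵀ - a aᵀ - b bᵀ`. The three rules are the cases `a ⬝ b = 2`, `0` and
`-1`, the last one together with `(e_i - e_j) + (e_j - e_k) = e_i - e_k`.
-/

open Matrix

/-- The projection matrix `m_{ij} = (1/2)(E_{ii} − E_{ij} − E_{ji} + E_{jj})`
onto the span of the root `v_i − v_j` of the root system `A_{n−1}`. -/
noncomputable def msym (F : Type*) [Field F] {n : ℕ} (i j : Fin n) :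
    Matrix (Fin n) (Fin n) F :=
  (2⁻¹ : F) • (Matrix.single i i 1 - Matrix.single i j 1 -
    Matrix.single j i 1 + Matrix.single j j 1)

section RootVector

variable (R : Type*) [Ring R] {ι : Type*} [DecidableEq ι]

def rootVector (i j : ι) : ι → R := Pi.single i 1 - Pi.single j 1

variable {R}

theorem rootVector_add_rootVector (i j k : ι) :
    rootVector R i j + rootVector R j k = rootVector R i k :=
  sub_add_sub_cancel _ _ _

variable [Fintype ι] {i j k l : ι}

theorem rootVector_dotProduct_self (hij : i ≠ j) :
    rootVector R i j ⬝ᵥ rootVector R i j = 2 := by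
  norm_num [rootVector, dotProduct_sub, hij, hij.symm]

theorem rootVector_dotProduct_of_disjoint (hik : i ≠ k) (hil : i ≠ l) (hjk : j ≠ k)
    (hjl : j ≠ l) : rootVector R i j ⬝ᵥ rootVector R k l = 0 := by
  simp [rootVector, dotProduct_sub, hik.symm, hil.symm, hjk.symm, hjl.symm]

theorem rootVector_dotProduct_rootVector (hij : i ≠ j) (hjk : j ≠ k) (hik : i ≠ k) :
    rootVector R i j ⬝ᵥ rootVector R j k = -1 := by
  simp [rootVector, dotProduct_sub, hij, hjk.symm, hik.symm]

end RootVector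

theorem vecMulVec_self_mul_add_mul_comm {R ι : Type*} [CommRing R] [Fintype ι] (a b : ι → R) :
    vecMulVec a a * vecMulVec b b + vecMulVec b b * vecMulVec a a =
      (a ⬝ᵥ b) • (vecMulVec (a + b) (a + b) - vecMulVec a a - vecMulVec b b) := by
  simp only [vecMulVec_mul_vecMulVec, vecMulVec_smul, dotProduct_comm b a, add_vecMulVec,
    vecMulVec_add]
  module

theorem msym_eq_smul_vecMulVec (F : Type*) [Field F] {n : ℕ} (i j : Fin n) :
    msym F i j = (2⁻¹ : F) • vecMulVec (rootVector F i j) (rootVector F i j) := by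
  simp only [msym, rootVector, single_eq_single_vecMulVec_single, sub_vecMulVec, vecMulVec_sub]
  abel_nf

theorem msym_jordan_msym (F : Type*) [Field F] {n : ℕ} (i j k l : Fin n) :
    (2⁻¹ : F) • (msym F i j * msym F k l + msym F k l * msym F i j) =
      (2⁻¹ * 4⁻¹ * (rootVector F i j ⬝ᵥ rootVector F k l)) •
        (vecMulVec (rootVector F i j + rootVector F k l) (rootVector F i j + rootVector F k l) -
          vecMulVec (rootVector F i j) (rootVector F i j) -
          vecMulVec (rootVector F k l) (rootVector F k l)) := by
  rw [msym_eq_smul_vecMulVec, msym_eq_smul_vecMulVec, smul_mul_smul_comm, smul_mul_smul_comm,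
    ← smul_add, vecMulVec_self_mul_add_mul_comm, smul_smul, smul_smul, ← mul_inv]
  norm_num

theorem stmt_2_general (F : Type*) [Field F] (h2 : (2 : F) ≠ 0) (n : ℕ) :
    (∀ i j : Fin n, i ≠ j →
      (2⁻¹ : F) • (msym F i j * msym F i j + msym F i j * msym F i j) = msym F i j) ∧
    (∀ i j k l : Fin n, i ≠ j → k ≠ l → i ≠ k → i ≠ l → j ≠ k → j ≠ l →
      (2⁻¹ : F) • (msym F i j * msym F k l + msym F k l * msym F i j) = 0) ∧
    (∀ i j k : Fin n, i ≠ j → j ≠ k → i ≠ k →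
      (2⁻¹ : F) • (msym F i j * msym F j k + msym F j k * msym F i j) =
        (4⁻¹ : F) • (msym F i j + msym F j k - msym F i k)) := by
  refine ⟨fun i j hij ↦ ?_, fun i j k l _ _ hik hil hjk hjl ↦ ?_, fun i j k hij hjk hik ↦ ?_⟩
  · rw [msym_jordan_msym, rootVector_dotProduct_self hij, msym_eq_smul_vecMulVec, add_vecMulVec,
      vecMulVec_add]
    match_scalars
    rw [show (4 : F) = 2 * 2 by norm_num]
    field_simp
    ring
  · rw [msym_jordan_msym, rootVector_dotProduct_of_disjoint hik hil hjk hjl, mul_zero, zero_smul]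
  · rw [msym_jordan_msym, rootVector_dotProduct_rootVector hij hjk hik, rootVector_add_rootVector,
      msym_eq_smul_vecMulVec, msym_eq_smul_vecMulVec, msym_eq_smul_vecMulVec]
    module

/-- With respect to the Jordan product `X ∙ Y = (1/2)(XY + YX)`, the matrices
`m_{ij}` satisfy the Matsuo multiplication rules: (i) `m_{ij} ∙ m_{ij} = m_{ij}`;
(ii) `m_{ij} ∙ m_{kl} = 0` when `{i,j} ∩ {k,l} = ∅`;
(iii) `m_{ij} ∙ m_{jk} = (1/4)(m_{ij} + m_{jk} − m_{ik})` for pairwise distinct `i, j, k`. -/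
theorem stmt_2 (F : Type*) [Field F] (h2 : (2 : F) ≠ 0) (n : ℕ) (hn : 1 ≤ n) :
    (∀ i j : Fin n, i ≠ j →
      (2⁻¹ : F) • (msym F i j * msym F i j + msym F i j * msym F i j) = msym F i j) ∧
    (∀ i j k l : Fin n, i ≠ j → k ≠ l → i ≠ k → i ≠ l → j ≠ k → j ≠ l →
      (2⁻¹ : F) • (msym F i j * msym F k l + msym F k l * msym F i j) = 0) ∧
    (∀ i j k : Fin n, i ≠ j → j ≠ k → i ≠ k →
      (2⁻¹ : F) • (msym F i j * msym F j k + msym F j k * msym F i j) =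
        (4⁻¹ : F) • (msym F i j + msym F j k - msym F i k)) :=
  stmt_2_general F h2 n
end

section
/- Let F be a field with char F ≠ 2 and let n ≥ 1. Let A be the F-algebra whose underlying vector space is the free F-module on the set of 2-element subsets of {1,…,n}, with commutative bilinear multiplication determined by: {i,j}·{i,j} = {i,j}; {i,j}·{k,l} = 0 whenever {i,j} ∩ {k,l} = ∅; and {i,j}·{j,k} = (1/4)({i,j} + {j,k} − {i,k}) for pairwise distinct i, j, k. (This is the Matsuo algebra M_{1/2}(Sym(n), D) for D the class of transpositions of Sym(n).) Then the F-linear map sending the basis element {i,j} to m_{ij} is an isomorphism of F-algebras from A onto the algebra of symmetric zero-sum n×n matrices over F with the Jordan product X ∙ Y = (1/2)(XY + YX). In particular, A is a Jordan algebra, i.e. it satisfies (ab)(aa) = a(b(aa)) for all a, b. -/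
open Matrix

/-- The Matsuo algebra `M_{1/2}(Sym(n), D)`, realized on the free `F`-module on the set of
2-element subsets of `{1,…,n}`: the commutative bilinear multiplication is determined by
`s·s = s`, `s·t = 0` if `s ∩ t = ∅`, and `{i,j}·{j,k} = (1/4)({i,j} + {j,k} − {i,k})`
for pairwise distinct `i, j, k` (here `{i,k}` is the symmetric difference `s ∆ t`). -/
noncomputable def pairMul (F : Type*) [Field F] (n : ℕ)
    (x y : {s : Finset (Fin n) // s.card = 2} → F) :
    {s : Finset (Fin n) // s.card = 2} → F :=
  ∑ s : {s : Finset (Fin n) // s.card = 2}, ∑ t : {s : Finset (Fin n) // s.card = 2},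
    (x s * y t) •
      (if s = t then Pi.single s (1 : F)
       else if (s : Finset (Fin n)) ∩ (t : Finset (Fin n)) = ∅ then
         (0 : {s : Finset (Fin n) // s.card = 2} → F)
       else (4⁻¹ : F) • (Pi.single s (1 : F) + Pi.single t (1 : F) -
         fun r : {s : Finset (Fin n) // s.card = 2} =>
           if (r : Finset (Fin n)) = symmDiff (s : Finset (Fin n)) (t : Finset (Fin n))
           then (1 : F) else 0))

/-- The matrix `m_{ij}` attached to a 2-element subset `{i,j}`. -/
noncomputable def msymOf (F : Type*) [Field F] {n : ℕ}
    (s : {s : Finset (Fin n) // s.card = 2}) : Matrix (Fin n) (Fin n) F :=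
  msym F (s.1.min' (Finset.card_pos.mp (by rw [s.2]; norm_num)))
    (s.1.max' (Finset.card_pos.mp (by rw [s.2]; norm_num)))

/-!
Write `w_{ij} = e_i - e_j`, so that `m_{ij} = ½ w_{ij} w_{ij}ᵀ` and
`m_{ij} m_{kl} = ¼ ⟨w_{ij}, w_{kl}⟩ w_{ij} w_{kl}ᵀ`. The inner products `2`, `0`, `-1` for
`s = t`, `s ∩ t = ∅`, `|s ∩ t| = 1` turn this into exactly the Matsuo multiplication table for
the Jordan product, so by bilinearity `η` is multiplicative. The `(i, j)` entry of `η x` is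
`-½ x_{ij}` for `i ≠ j`, which gives injectivity, and a matrix with zero row sums is determined by
its off-diagonal entries, which gives the image. The Jordan identity then transfers along the
injective multiplicative map `η` from the symmetrized product of an associative algebra.
-/

lemma Finset.min'_max'_of_eq_pair {α : Type*} [LinearOrder α] {s : Finset α} {i j : α}
    (hs : s = {i, j}) (h : s.Nonempty) :
    (s.min' h = i ∧ s.max' h = j) ∨ (s.min' h = j ∧ s.max' h = i) := by
  subst hs
  rcases le_total i j with hij | hij
  · left; simp [hij]
  · right; simp [hij]

lemma Finset.exists_eq_pair_of_mem {α : Type*} [DecidableEq α] {s : Finset α} (hs : s.card = 2)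
    {b : α} (hb : b ∈ s) : ∃ a, a ≠ b ∧ s = {a, b} := by
  obtain ⟨u, v, huv, rfl⟩ := Finset.card_eq_two.mp hs
  simp only [Finset.mem_insert, Finset.mem_singleton] at hb
  rcases hb with rfl | rfl
  · exact ⟨v, huv.symm, Finset.pair_comm _ _⟩
  · exact ⟨u, huv, rfl⟩

lemma Finset.exists_eq_pair_pair_of_inter_nonempty {α : Type*} [DecidableEq α]
    {s t : Finset α} (hs : s.card = 2) (ht : t.card = 2) (hst : s ≠ t) (h : (s ∩ t).Nonempty) :
    ∃ a b c, a ≠ b ∧ b ≠ c ∧ a ≠ c ∧ s = {a, b} ∧ t = {b, c} := by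
  obtain ⟨b, hb⟩ := h
  obtain ⟨a, hab, rfl⟩ := exists_eq_pair_of_mem hs (Finset.mem_inter.mp hb).1
  obtain ⟨c, hcb, rfl⟩ := exists_eq_pair_of_mem ht (Finset.mem_inter.mp hb).2
  exact ⟨a, b, c, hab, hcb.symm, fun hac => hst (by rw [hac]), rfl, Finset.pair_comm _ _⟩

lemma Finset.symmDiff_pair_pair {α : Type*} [DecidableEq α] {a b c : α} (hab : a ≠ b)
    (hbc : b ≠ c) (hac : a ≠ c) : symmDiff ({a, b} : Finset α) {b, c} = {a, c} := by
  ext x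
  simp only [Finset.mem_symmDiff, Finset.mem_insert, Finset.mem_singleton]
  grind

lemma Matrix.eq_zero_of_offDiag_eq_zero_of_sum_row_eq_zero {ι α : Type*} [Fintype ι]
    [AddCommMonoid α] {D : Matrix ι ι α} (hoff : ∀ i j, i ≠ j → D i j = 0)
    (hrow : ∀ i, ∑ j, D i j = 0) : D = 0 := by
  ext i j
  rcases eq_or_ne i j with rfl | hij
  · rw [zero_apply, ← hrow i, Finset.sum_eq_single i (fun j _ hji => hoff i j hji.symm) (by simp)]
  · exact hoff i j hij

section JordanProd

variable {F A : Type*} [Field F] [Ring A] [Algebra F A]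

variable (F) in
def jordanProd (a b : A) : A :=
  (2⁻¹ : F) • (a * b + b * a)

lemma jordanProd_self (h2 : (2 : F) ≠ 0) (a : A) : jordanProd F a a = a * a := by
  rw [jordanProd, ← two_smul F, smul_smul, inv_mul_cancel₀ h2, one_smul]

lemma jordanProd_sum_smul {ι κ : Type*} [Fintype ι] [Fintype κ]
    (x : ι → F) (y : κ → F) (a : ι → A) (b : κ → A) :
    jordanProd F (∑ i, x i • a i) (∑ k, y k • b k)
      = ∑ i, ∑ k, (x i * y k) • jordanProd F (a i) (b k) := by
  simp only [jordanProd, Finset.sum_mul_sum, smul_mul_smul_comm]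
  rw [Finset.sum_comm (f := fun k i => (y k * x i) • (b k * a i)), ← Finset.sum_add_distrib,
    Finset.smul_sum]
  refine Finset.sum_congr rfl fun i _ => ?_
  rw [← Finset.sum_add_distrib, Finset.smul_sum]
  refine Finset.sum_congr rfl fun k _ => ?_
  rw [mul_comm (y k), ← smul_add, smul_comm]

lemma jordanProd_lmul_comm_rmul_rmul (a b : A) :
    jordanProd F (jordanProd F a b) (jordanProd F a a)
      = jordanProd F a (jordanProd F b (jordanProd F a a)) := by
  simp only [jordanProd, smul_add, add_mul, mul_add, smul_mul_assoc, mul_smul_comm, mul_assoc]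
  abel

end JordanProd

namespace Matsuo

variable {F : Type*} [Field F] {n : ℕ}

variable (F) in
def rootVec (i j : Fin n) : Fin n → F :=
  Pi.single i 1 - Pi.single j 1

lemma msym_eq_vecMulVec (i j : Fin n) :
    msym F i j = (2⁻¹ : F) • vecMulVec (rootVec F i j) (rootVec F i j) := by
  simp only [msym, rootVec, single_eq_single_vecMulVec_single, sub_vecMulVec, vecMulVec_sub]
  congr 1
  abel

lemma msym_comm (i j : Fin n) : msym F i j = msym F j i := by
  rw [msym_eq_vecMulVec, msym_eq_vecMulVec, rootVec, rootVec, ← neg_sub, neg_vecMulVec,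
    vecMulVec_neg, neg_neg]

lemma msym_transpose (i j : Fin n) : (msym F i j)ᵀ = msym F i j := by
  rw [msym_eq_vecMulVec, transpose_smul, transpose_vecMulVec]

lemma sum_msym_row (i j a : Fin n) : ∑ b, msym F i j a b = 0 := by
  have hsum : ∑ b, rootVec F i j b = 0 := by simp [rootVec, Finset.sum_sub_distrib]
  simp only [msym_eq_vecMulVec, Matrix.smul_apply, vecMulVec_apply, smul_eq_mul,
    ← Finset.mul_sum, hsum, mul_zero]

lemma msym_apply_of_ne {k l i j : Fin n} (hkl : k ≠ l) (hij : i ≠ j) :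
    msym F k l i j = if ({k, l} : Finset (Fin n)) = {i, j} then -2⁻¹ else 0 := by
  simp only [← Finset.coe_inj, Finset.coe_pair, Set.pair_eq_pair_iff]
  simp only [msym_eq_vecMulVec, Matrix.smul_apply, vecMulVec_apply, smul_eq_mul, rootVec,
    Pi.sub_apply, Pi.single_apply]
  by_cases h1 : i = k <;> by_cases h2 : i = l <;> by_cases h3 : j = k <;> by_cases h4 : j = l <;>
    simp_all [eq_comm]

lemma rootVec_dotProduct (i j k l : Fin n) :
    rootVec F i j ⬝ᵥ rootVec F k l = (if i = k then (1 : F) else 0) - (if i = l then 1 else 0)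
      - (if j = k then 1 else 0) + (if j = l then 1 else 0) := by
  simp only [rootVec, sub_dotProduct, dotProduct_sub, single_dotProduct, Pi.single_apply]
  simp [eq_comm]
  ring

lemma msym_mul_msym (i j k l : Fin n) :
    msym F i j * msym F k l = ((4⁻¹ : F) * (rootVec F i j ⬝ᵥ rootVec F k l)) •
      vecMulVec (rootVec F i j) (rootVec F k l) := by
  rw [msym_eq_vecMulVec, msym_eq_vecMulVec, smul_mul_smul_comm, vecMulVec_mul_vecMulVec,
    vecMulVec_smul, smul_smul, ← mul_inv]
  norm_num

lemma msym_mul_self (h2 : (2 : F) ≠ 0) {i j : Fin n} (hij : i ≠ j) :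
    msym F i j * msym F i j = msym F i j := by
  rw [msym_mul_msym, rootVec_dotProduct, msym_eq_vecMulVec]
  simp only [hij, hij.symm, if_true, if_false]
  congr 1
  rw [show (4 : F) = 2 * 2 by norm_num]
  field_simp
  norm_num

lemma msym_mul_msym_of_disjoint {i j k l : Fin n} (hik : i ≠ k) (hil : i ≠ l) (hjk : j ≠ k)
    (hjl : j ≠ l) : msym F i j * msym F k l = 0 := by
  simp [msym_mul_msym, rootVec_dotProduct, hik, hil, hjk, hjl]

lemma jordanProd_msym_msym {a b c : Fin n} (hab : a ≠ b) (hbc : b ≠ c) (hac : a ≠ c) :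
    jordanProd F (msym F a b) (msym F b c)
      = (4⁻¹ : F) • (msym F a b + msym F b c - msym F a c) := by
  have hac_split : rootVec F a c = rootVec F a b + rootVec F b c := by
    simp only [rootVec]
    abel
  rw [jordanProd, msym_mul_msym, msym_mul_msym, msym_eq_vecMulVec, msym_eq_vecMulVec,
    msym_eq_vecMulVec (F := F) a c, hac_split]
  simp only [rootVec_dotProduct, hab, hbc, hac, hab.symm, hbc.symm, hac.symm, if_true, if_false]
  ext x y
  simp only [Matrix.smul_apply, Matrix.add_apply, Matrix.sub_apply, vecMulVec_apply,
    Pi.add_apply, smul_eq_mul]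
  ring

abbrev TwoSubset (n : ℕ) := {s : Finset (Fin n) // s.card = 2}

lemma TwoSubset.nonempty (s : TwoSubset n) : s.1.Nonempty :=
  Finset.card_pos.mp (by rw [s.2]; norm_num)

lemma msymOf_eq_msym {s : TwoSubset n} {i j : Fin n} (hs : s.1 = {i, j}) :
    msymOf F s = msym F i j := by
  rcases Finset.min'_max'_of_eq_pair hs s.nonempty with ⟨hmin, hmax⟩ | ⟨hmin, hmax⟩
  · rw [msymOf, hmin, hmax]
  · rw [msymOf, hmin, hmax, msym_comm]

lemma msymOf_apply_of_ne (s : TwoSubset n) {i j : Fin n} (hij : i ≠ j) :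
    msymOf F s i j = if s.1 = {i, j} then -2⁻¹ else 0 := by
  obtain ⟨k, l, hkl, hs⟩ := Finset.card_eq_two.mp s.2
  rw [msymOf_eq_msym hs, msym_apply_of_ne hkl hij, hs]

variable (F n) in
noncomputable def matsuoToMatrix : (TwoSubset n → F) →ₗ[F] Matrix (Fin n) (Fin n) F :=
  Fintype.linearCombination F (msymOf F)

lemma matsuoToMatrix_single (s : TwoSubset n) :
    matsuoToMatrix F n (Pi.single s 1) = msymOf F s := by
  simp [matsuoToMatrix]

lemma matsuoToMatrix_apply_of_ne (x : TwoSubset n → F) {i j : Fin n} (hij : i ≠ j)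
    {s : TwoSubset n} (hs : s.1 = {i, j}) :
    matsuoToMatrix F n x i j = -2⁻¹ * x s := by
  simp only [matsuoToMatrix, Fintype.linearCombination_apply, Matrix.sum_apply,
    Matrix.smul_apply, smul_eq_mul, msymOf_apply_of_ne _ hij, ← hs, ← Subtype.ext_iff,
    mul_ite, mul_zero, Finset.sum_ite_eq', Finset.mem_univ, if_true, mul_comm]

lemma matsuoToMatrix_injective (h2 : (2 : F) ≠ 0) : Function.Injective (matsuoToMatrix F n) := by
  intro x y hxy
  funext s
  obtain ⟨i, j, hij, hs⟩ := Finset.card_eq_two.mp s.2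
  have h := congrFun (congrFun hxy i) j
  rw [matsuoToMatrix_apply_of_ne x hij hs, matsuoToMatrix_apply_of_ne y hij hs] at h
  exact mul_left_cancel₀ (neg_ne_zero.mpr (inv_ne_zero h2)) h

lemma matsuoToMatrix_transpose (x : TwoSubset n → F) :
    (matsuoToMatrix F n x)ᵀ = matsuoToMatrix F n x := by
  simp only [matsuoToMatrix, Fintype.linearCombination_apply, transpose_sum, transpose_smul,
    msymOf, msym_transpose]

lemma sum_matsuoToMatrix_row (x : TwoSubset n → F) (i : Fin n) :
    ∑ j, matsuoToMatrix F n x i j = 0 := by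
  simp only [matsuoToMatrix, Fintype.linearCombination_apply, Matrix.sum_apply,
    Matrix.smul_apply, smul_eq_mul]
  rw [Finset.sum_comm]
  simp only [← Finset.mul_sum, msymOf, sum_msym_row, mul_zero, Finset.sum_const_zero]

lemma exists_matsuoToMatrix_eq (h2 : (2 : F) ≠ 0) {X : Matrix (Fin n) (Fin n) F} (hX : Xᵀ = X)
    (hrow : ∀ i, ∑ j, X i j = 0) : ∃ x, matsuoToMatrix F n x = X := by
  let x : TwoSubset n → F := fun s => -2 * X (s.1.min' s.nonempty) (s.1.max' s.nonempty)
  have hoff : ∀ i j, i ≠ j → matsuoToMatrix F n x i j = X i j := by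
    intro i j hij
    let s : TwoSubset n := ⟨{i, j}, Finset.card_pair hij⟩
    rw [matsuoToMatrix_apply_of_ne x hij (s := s) rfl]
    rcases Finset.min'_max'_of_eq_pair (s := s.1) rfl s.nonempty with ⟨hmin, hmax⟩ | ⟨hmin, hmax⟩
    · simp only [x, hmin, hmax]
      field_simp
    · simp only [x, hmin, hmax]
      rw [show X j i = X i j from congrFun (congrFun hX i) j]
      field_simp
  refine ⟨x, (sub_eq_zero.mp (eq_zero_of_offDiag_eq_zero_of_sum_row_eq_zero ?_ ?_)).symm⟩
  · intro i j hij
    rw [Matrix.sub_apply, hoff i j hij, sub_self]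
  · intro i
    simp only [Matrix.sub_apply, Finset.sum_sub_distrib, hrow, sum_matsuoToMatrix_row, sub_zero]

lemma range_matsuoToMatrix (h2 : (2 : F) ≠ 0) :
    Set.range (matsuoToMatrix F n) = {X | Xᵀ = X ∧ ∀ i, ∑ j, X i j = 0} := by
  ext X
  constructor
  · rintro ⟨x, rfl⟩
    exact ⟨matsuoToMatrix_transpose x, sum_matsuoToMatrix_row x⟩
  · rintro ⟨hX, hrow⟩
    exact exists_matsuoToMatrix_eq h2 hX hrow

variable (F) in
noncomputable def basisMul (s t : TwoSubset n) : TwoSubset n → F :=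
  if s = t then Pi.single s (1 : F)
  else if (s : Finset (Fin n)) ∩ (t : Finset (Fin n)) = ∅ then 0
  else (4⁻¹ : F) • (Pi.single s (1 : F) + Pi.single t (1 : F) -
    fun r : TwoSubset n =>
      if (r : Finset (Fin n)) = symmDiff (s : Finset (Fin n)) (t : Finset (Fin n))
      then (1 : F) else 0)

lemma pairMul_eq_sum (x y : TwoSubset n → F) :
    pairMul F n x y = ∑ s, ∑ t, (x s * y t) • basisMul F s t := rfl

lemma matsuoToMatrix_basisMul (h2 : (2 : F) ≠ 0) (s t : TwoSubset n) :
    matsuoToMatrix F n (basisMul F s t) = jordanProd F (msymOf F s) (msymOf F t) := by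
  rw [basisMul]
  split_ifs with hst hdisj
  · subst hst
    obtain ⟨i, j, hij, hs⟩ := Finset.card_eq_two.mp s.2
    rw [matsuoToMatrix_single, jordanProd_self h2, msymOf_eq_msym hs, msym_mul_self h2 hij]
  · obtain ⟨i, j, -, hs⟩ := Finset.card_eq_two.mp s.2
    obtain ⟨k, l, -, ht⟩ := Finset.card_eq_two.mp t.2
    have hne : (i ≠ k ∧ j ≠ k) ∧ i ≠ l ∧ j ≠ l := by
      have := Finset.disjoint_iff_inter_eq_empty.mpr hdisj
      rw [hs, ht] at this
      simpa [eq_comm] using this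
    obtain ⟨⟨hik, hjk⟩, hil, hjl⟩ := hne
    rw [map_zero, jordanProd, msymOf_eq_msym hs, msymOf_eq_msym ht,
      msym_mul_msym_of_disjoint hik hil hjk hjl,
      msym_mul_msym_of_disjoint hik.symm hjk.symm hil.symm hjl.symm, add_zero, smul_zero]
  · obtain ⟨a, b, c, hab, hbc, hac, hs, ht⟩ := Finset.exists_eq_pair_pair_of_inter_nonempty
      s.2 t.2 (fun h => hst (Subtype.ext h)) (Finset.nonempty_iff_ne_empty.mpr hdisj)
    let u : TwoSubset n := ⟨{a, c}, Finset.card_pair hac⟩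
    have hind : (fun r : TwoSubset n =>
        if (r : Finset (Fin n)) = symmDiff (s : Finset (Fin n)) (t : Finset (Fin n))
        then (1 : F) else 0) = Pi.single u 1 := by
      funext r
      rw [Pi.single_apply, hs, ht, Finset.symmDiff_pair_pair hab hbc hac]
      simp only [u, Subtype.ext_iff]
    rw [hind, map_smul, map_sub, map_add, matsuoToMatrix_single, matsuoToMatrix_single,
      matsuoToMatrix_single, msymOf_eq_msym hs, msymOf_eq_msym ht,
      msymOf_eq_msym (s := u) rfl, jordanProd_msym_msym hab hbc hac]

lemma matsuoToMatrix_pairMul (h2 : (2 : F) ≠ 0) (x y : TwoSubset n → F) :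
    matsuoToMatrix F n (pairMul F n x y)
      = jordanProd F (matsuoToMatrix F n x) (matsuoToMatrix F n y) := by
  simp only [pairMul_eq_sum, map_sum, map_smul, matsuoToMatrix_basisMul h2]
  exact (jordanProd_sum_smul x y _ _).symm

end Matsuo

open Matsuo in
theorem stmt_3_general (F : Type*) [Field F] (h2 : (2 : F) ≠ 0) (n : ℕ) :
    (let η : ({s : Finset (Fin n) // s.card = 2} → F) → Matrix (Fin n) (Fin n) F :=
      fun x => ∑ s : {s : Finset (Fin n) // s.card = 2}, x s • msymOf F s
    (∀ (c : F) (x y : {s : Finset (Fin n) // s.card = 2} → F),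
        η (c • x + y) = c • η x + η y) ∧
      Function.Injective η ∧
      Set.range η = {X : Matrix (Fin n) (Fin n) F | Xᵀ = X ∧ ∀ i, ∑ j, X i j = 0} ∧
      (∀ x y, η (pairMul F n x y) = (2⁻¹ : F) • (η x * η y + η y * η x))) ∧
    (∀ a b : {s : Finset (Fin n) // s.card = 2} → F,
      pairMul F n (pairMul F n a b) (pairMul F n a a) =
        pairMul F n a (pairMul F n b (pairMul F n a a))) := by
  refine ⟨⟨fun c x y => ?_, matsuoToMatrix_injective h2, range_matsuoToMatrix h2,
    matsuoToMatrix_pairMul h2⟩, fun a b => matsuoToMatrix_injective h2 ?_⟩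
  · exact ((matsuoToMatrix F n).map_add _ _).trans (congrArg (· + _) (map_smul _ c x))
  · simp only [matsuoToMatrix_pairMul h2]
    exact jordanProd_lmul_comm_rmul_rmul _ _

/-- The `F`-linear map sending the basis element `{i,j}` of the Matsuo algebra
`M_{1/2}(Sym(n), D)` to `m_{ij}` is an isomorphism of `F`-algebras onto the algebra of symmetric
zero-sum `n × n` matrices with the Jordan product `X ∙ Y = (1/2)(XY + YX)`.  In particular the
Matsuo algebra satisfies the Jordan identity `(ab)(aa) = a(b(aa))`. -/
theorem stmt_3 (F : Type*) [Field F] (h2 : (2 : F) ≠ 0) (n : ℕ) (hn : 1 ≤ n) :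
    (let η : ({s : Finset (Fin n) // s.card = 2} → F) → Matrix (Fin n) (Fin n) F :=
      fun x => ∑ s : {s : Finset (Fin n) // s.card = 2}, x s • msymOf F s
    (∀ (c : F) (x y : {s : Finset (Fin n) // s.card = 2} → F),
        η (c • x + y) = c • η x + η y) ∧
      Function.Injective η ∧
      Set.range η = {X : Matrix (Fin n) (Fin n) F | Xᵀ = X ∧ ∀ i, ∑ j, X i j = 0} ∧
      (∀ x y, η (pairMul F n x y) = (2⁻¹ : F) • (η x * η y + η y * η x))) ∧
    (∀ a b : {s : Finset (Fin n) // s.card = 2} → F,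
      pairMul F n (pairMul F n a b) (pairMul F n a a) =
        pairMul F n a (pairMul F n b (pairMul F n a a))) :=
  stmt_3_general F h2 n
end
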